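/- arXiv:1009.5225 — 2 statements merged into one kernel-verified Lean document; each statement's English description precedes it below -/
import Mathlib

section
/- Let f : [0, b*] → ℝ be twice differentiable on an open interval containing [a, mb], 0 ≤ a < b ≤ b*, m ∈ (0,1], a < mb, f'' integrable on [a, mb]. If |f''|^q is (α,m)-convex on [a,b] for (α,m) ∈ [0,1]×(0,1], q > 1, and 1/p + 1/q = 1, then |(f(a)+f(mb))/2 − (1/(mb−a))∫_a^{mb} f(x)dx| ≤ ((mb−a)²/8)·(Γ(1+p)/Γ(3/2+p))^{1/p}·( |f''(a)|^q/(α+1) + m|f''(b)|^q·α/(α+1) )^{1/q}. -/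
/-!
Integrating by parts twice writes the trapezoid error as
`(2 (m b - a))⁻¹ ∫ₐ^{mb} (x - a)(m b - x) f''(x) dx`. Hölder's inequality splits this into the
`Lᵖ` norm of the kernel and the `L^q` norm of `f''`. The former is, after rescaling to `[0, 1]`,
a Beta integral; Legendre's duplication formula and `√π < 2` bound it by
`2^{-2p} Γ(1 + p) / Γ(3/2 + p)`. For the latter, every `x ∈ [a, m b]` is `t a + m (1 - t) b` with
`t = (m b - x) / (m b - a)`, so `(α, m)`-convexity bounds `|f''(x)|^q` pointwise by
`t^α |f''(a)|^q + m (1 - t^α) |f''(b)|^q`, whose integral is explicit.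
-/

open MeasureTheory Set Real

theorem integral_rpow_mul_one_sub_rpow {u v : ℝ} (hu : -1 < u) (hv : -1 < v) :
    ∫ t in (0:ℝ)..1, t ^ u * (1 - t) ^ v
      = Gamma (u + 1) * Gamma (v + 1) / Gamma (u + v + 2) := by
  have hbeta : Complex.betaIntegral (u + 1 : ℝ) (v + 1 : ℝ)
      = ((∫ t in (0:ℝ)..1, t ^ u * (1 - t) ^ v : ℝ) : ℂ) := by
    rw [Complex.betaIntegral, ← intervalIntegral.integral_ofReal]
    refine intervalIntegral.integral_congr fun t ht => ?_
    rw [uIcc_of_le zero_le_one] at ht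
    simp only [Complex.ofReal_add, Complex.ofReal_one, add_sub_cancel_right, Complex.ofReal_mul,
      Complex.ofReal_cpow ht.1, Complex.ofReal_cpow (sub_nonneg.2 ht.2), Complex.ofReal_sub]
  have key := Complex.Gamma_mul_Gamma_eq_betaIntegral (s := (u + 1 : ℝ)) (t := (v + 1 : ℝ))
    (by simp; linarith) (by simp; linarith)
  rw [hbeta, ← Complex.ofReal_add, Complex.Gamma_ofReal, Complex.Gamma_ofReal,
    Complex.Gamma_ofReal] at key
  rw [eq_div_iff (Gamma_pos_of_pos (by linarith)).ne', show u + v + 2 = u + 1 + (v + 1) by ring,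
    mul_comm]
  exact_mod_cast key.symm

theorem integral_rpow_mul_one_sub_rpow_self {p : ℝ} (hp : -1 < p) :
    ∫ t in (0:ℝ)..1, t ^ p * (1 - t) ^ p
      = 2 ^ (-1 - 2 * p) * √π * (Gamma (1 + p) / Gamma (3 / 2 + p)) := by
  have hdup := Gamma_mul_Gamma_add_half (p + 1)
  rw [show p + 1 + 1 / 2 = 3 / 2 + p by ring, show 1 - 2 * (p + 1) = -1 - 2 * p by ring,
    show 2 * (p + 1) = p + p + 2 by ring] at hdup
  rw [integral_rpow_mul_one_sub_rpow hp hp, add_comm 1 p, mul_div_assoc',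
    div_eq_div_iff (Gamma_pos_of_pos (by linarith)).ne' (Gamma_pos_of_pos (by linarith)).ne']
  linear_combination Gamma (p + 1) * hdup

theorem integral_rpow_mul_one_sub_rpow_self_le {p : ℝ} (hp : -1 < p) :
    ∫ t in (0:ℝ)..1, t ^ p * (1 - t) ^ p
      ≤ 2 ^ (-2 * p) * (Gamma (1 + p) / Gamma (3 / 2 + p)) := by
  have hsqrt : √π ≤ 2 := by
    rw [show (2:ℝ) = √(2 ^ 2) by simp]
    exact sqrt_le_sqrt (by linarith [pi_lt_four])
  have hpow : (2:ℝ) ^ (-1 - 2 * p) * 2 = 2 ^ (-2 * p) := by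
    rw [← rpow_add_one two_ne_zero]; ring_nf
  rw [integral_rpow_mul_one_sub_rpow_self hp, ← hpow]
  gcongr
  exact div_nonneg (Gamma_pos_of_pos (by linarith)).le (Gamma_pos_of_pos (by linarith)).le

theorem integral_mul_sub_rpow {a B p : ℝ} (hab : a < B) :
    ∫ x in a..B, ((x - a) * (B - x)) ^ p
      = (B - a) ^ (2 * p + 1) * ∫ t in (0:ℝ)..1, t ^ p * (1 - t) ^ p := by
  have hL : 0 < B - a := sub_pos.2 hab
  have hsub := intervalIntegral.integral_comp_mul_add (a := 0) (b := 1)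
    (fun x => ((x - a) * (B - x)) ^ p) hL.ne' a
  simp only [mul_zero, zero_add, mul_one, sub_add_cancel] at hsub
  rw [eq_inv_smul_iff₀ hL.ne'] at hsub
  rw [← hsub, smul_eq_mul, rpow_add hL, rpow_one, mul_comm _ (B - a), mul_assoc,
    ← intervalIntegral.integral_const_mul ((B - a) ^ (2 * p))]
  congr 1
  refine intervalIntegral.integral_congr fun t ht => ?_
  rw [uIcc_of_le zero_le_one] at ht
  have h1t : 0 ≤ 1 - t := sub_nonneg.2 ht.2
  rw [show ((B - a) * t + a - a) * (B - ((B - a) * t + a)) = (B - a) ^ 2 * (t * (1 - t)) by ring,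
    mul_rpow (by positivity) (mul_nonneg ht.1 h1t), mul_rpow ht.1 h1t, ← rpow_natCast,
    ← rpow_mul hL.le]
  norm_num

theorem integral_mul_sub_rpow_le {a B p : ℝ} (hab : a < B) (hp : -1 < p) :
    ∫ x in a..B, ((x - a) * (B - x)) ^ p
      ≤ (B - a) ^ (2 * p + 1) * 2 ^ (-2 * p) * (Gamma (1 + p) / Gamma (3 / 2 + p)) := by
  rw [integral_mul_sub_rpow hab, mul_assoc]
  have := integral_rpow_mul_one_sub_rpow_self_le hp
  gcongr

theorem integral_sub_mul_sub_mul_eq {f f' f'' : ℝ → ℝ} {a B : ℝ} (hab : a ≤ B)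
    (hf : ∀ x ∈ Icc a B, HasDerivAt f (f' x) x)
    (hf' : ∀ x ∈ Icc a B, HasDerivAt f' (f'' x) x)
    (hint : IntervalIntegrable f'' volume a B) :
    ∫ x in a..B, (x - a) * (B - x) * f'' x = (B - a) * (f a + f B) - 2 * ∫ x in a..B, f x := by
  rw [← uIcc_of_le hab] at hf hf'
  have hw : ∀ x ∈ uIcc a B, HasDerivAt (fun x => (x - a) * (B - x)) (a + B - 2 * x) x :=
    fun x _ => (((hasDerivAt_id x).sub_const a).mul ((hasDerivAt_id x).const_sub B)).congr_deriv
      (by simp only [id_eq]; ring)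
  have hw' : ∀ x ∈ uIcc a B, HasDerivAt (fun x => a + B - 2 * x) (-2) x :=
    fun x _ => (((hasDerivAt_id x).const_mul 2).const_sub (a + B)).congr_deriv (by simp)
  have hf'int : IntervalIntegrable f' volume a B :=
    ContinuousOn.intervalIntegrable fun x hx => (hf' x hx).continuousAt.continuousWithinAt
  rw [intervalIntegral.integral_mul_deriv_eq_deriv_mul hw hf'
      ((by fun_prop : Continuous _).intervalIntegrable _ _) hint,
    intervalIntegral.integral_mul_deriv_eq_deriv_mul hw' hf intervalIntegrable_const hf'int,
    intervalIntegral.integral_const_mul]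
  ring

theorem abs_trapezoid_sub_average_le {f f' f'' : ℝ → ℝ} {a B : ℝ} (hab : a < B)
    (hf : ∀ x ∈ Icc a B, HasDerivAt f (f' x) x)
    (hf' : ∀ x ∈ Icc a B, HasDerivAt f' (f'' x) x)
    (hint : IntervalIntegrable f'' volume a B) :
    |(f a + f B) / 2 - 1 / (B - a) * ∫ x in a..B, f x|
      ≤ 1 / (2 * (B - a)) * ∫ x in a..B, (x - a) * (B - x) * |f'' x| := by
  have hL : 0 < B - a := sub_pos.2 hab
  have hid : (f a + f B) / 2 - 1 / (B - a) * ∫ x in a..B, f x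
      = 1 / (2 * (B - a)) * ∫ x in a..B, (x - a) * (B - x) * f'' x := by
    rw [integral_sub_mul_sub_mul_eq hab.le hf hf' hint]
    field_simp
  rw [hid, abs_mul, abs_of_pos (by positivity)]
  gcongr
  refine (intervalIntegral.abs_integral_le_integral_abs hab.le).trans_eq
    (intervalIntegral.integral_congr fun x hx => ?_)
  rw [uIcc_of_le hab.le] at hx
  simp only [abs_mul, abs_of_nonneg (sub_nonneg.2 hx.1), abs_of_nonneg (sub_nonneg.2 hx.2)]

theorem integral_sub_div_sub_rpow {a B α : ℝ} (hab : a < B) (hα : -1 < α) :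
    ∫ x in a..B, ((B - x) / (B - a)) ^ α = (B - a) / (α + 1) := by
  have hL : 0 < B - a := sub_pos.2 hab
  rw [intervalIntegral.integral_comp_sub_left (fun y => (y / (B - a)) ^ α), sub_self,
    intervalIntegral.integral_comp_div (fun y => y ^ α) hL.ne', zero_div, div_self hL.ne',
    integral_rpow (Or.inl hα), one_rpow, zero_rpow (by linarith), smul_eq_mul]
  ring

theorem intervalIntegral_mul_le_Lp_mul_Lq_of_nonneg {p q : ℝ} (hpq : p.HolderConjugate q)
    {f g : ℝ → ℝ} {a b : ℝ} (hab : a ≤ b) (hf0 : ∀ x ∈ Ioc a b, 0 ≤ f x)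
    (hg0 : ∀ x ∈ Ioc a b, 0 ≤ g x) (hfm : AEStronglyMeasurable f (volume.restrict (Ioc a b)))
    (hgm : AEStronglyMeasurable g (volume.restrict (Ioc a b)))
    (hfp : IntervalIntegrable (fun x => f x ^ p) volume a b)
    (hgq : IntervalIntegrable (fun x => g x ^ q) volume a b) :
    ∫ x in a..b, f x * g x
      ≤ (∫ x in a..b, f x ^ p) ^ (1 / p) * (∫ x in a..b, g x ^ q) ^ (1 / q) := by
  have memLp : ∀ {r : ℝ} {h : ℝ → ℝ}, 0 < r → (∀ x ∈ Ioc a b, 0 ≤ h x) →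
      AEStronglyMeasurable h (volume.restrict (Ioc a b)) →
      IntervalIntegrable (fun x => h x ^ r) volume a b →
      MemLp h (ENNReal.ofReal r) (volume.restrict (Ioc a b)) := by
    intro r h hr h0 hm hi
    refine (integrable_norm_rpow_iff hm (by simpa using hr) ENNReal.ofReal_ne_top).1 ?_
    rw [ENNReal.toReal_ofReal hr.le]
    refine hi.1.congr ?_
    filter_upwards [ae_restrict_mem measurableSet_Ioc] with x hx
    rw [Real.norm_of_nonneg (h0 x hx)]
  simp only [intervalIntegral.integral_of_le hab]
  exact integral_mul_le_Lp_mul_Lq_of_nonneg hpq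
    ((ae_restrict_iff' measurableSet_Ioc).2 (Filter.Eventually.of_forall hf0))
    ((ae_restrict_iff' measurableSet_Ioc).2 (Filter.Eventually.of_forall hg0))
    (memLp hpq.pos hf0 hfm hfp) (memLp hpq.symm.pos hg0 hgm hgq)

theorem abs_trapezoid_sub_average_le_Lp_mul_Lq {f f' f'' : ℝ → ℝ} {a B p q : ℝ}
    (hpq : p.HolderConjugate q) (hab : a < B) (hf : ∀ x ∈ Icc a B, HasDerivAt f (f' x) x)
    (hf' : ∀ x ∈ Icc a B, HasDerivAt f' (f'' x) x) (hint : IntervalIntegrable f'' volume a B)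
    (hint_q : IntervalIntegrable (fun x => |f'' x| ^ q) volume a B) :
    |(f a + f B) / 2 - 1 / (B - a) * ∫ x in a..B, f x|
      ≤ 1 / (2 * (B - a)) * ((∫ x in a..B, ((x - a) * (B - x)) ^ p) ^ (1 / p)
          * (∫ x in a..B, |f'' x| ^ q) ^ (1 / q)) := by
  refine (abs_trapezoid_sub_average_le hab hf hf' hint).trans ?_
  gcongr
  exact intervalIntegral_mul_le_Lp_mul_Lq_of_nonneg hpq hab.le
    (fun x hx => mul_nonneg (sub_nonneg.2 hx.1.le) (sub_nonneg.2 hx.2)) (fun x _ => abs_nonneg _)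
    (by fun_prop) hint.1.aestronglyMeasurable.norm
    (((continuous_rpow_const hpq.nonneg).comp (by fun_prop)).intervalIntegrable _ _) hint_q

def AlphaMConvexOn (α m : ℝ) (s : Set ℝ) (g : ℝ → ℝ) : Prop :=
  ∀ x ∈ s, ∀ y ∈ s, ∀ t ∈ Icc (0:ℝ) 1,
    g (t * x + m * (1 - t) * y) ≤ t ^ α * g x + m * (1 - t ^ α) * g y

namespace AlphaMConvexOn

variable {α m a b : ℝ} {g : ℝ → ℝ}

theorem le_interpolant (hg : AlphaMConvexOn α m (Icc a b) g) (hab : a ≤ b) (hamb : a < m * b)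
    {x : ℝ} (hx : x ∈ Icc a (m * b)) :
    g x ≤ (g a - m * g b) * ((m * b - x) / (m * b - a)) ^ α + m * g b := by
  have hL : 0 < m * b - a := sub_pos.2 hamb
  set t := (m * b - x) / (m * b - a)
  have ht : t ∈ Icc (0:ℝ) 1 :=
    ⟨div_nonneg (sub_nonneg.2 hx.2) hL.le, (div_le_one hL).2 (by linarith [hx.1])⟩
  have hxt : t * a + m * (1 - t) * b = x := by
    simp only [t]
    field_simp
    ring
  calc g x = g (t * a + m * (1 - t) * b) := by rw [hxt]
    _ ≤ t ^ α * g a + m * (1 - t ^ α) * g b :=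
      hg a ⟨le_rfl, hab⟩ b ⟨hab, le_rfl⟩ t ht
    _ = (g a - m * g b) * t ^ α + m * g b := by ring

theorem intervalIntegrable (hg : AlphaMConvexOn α m (Icc a b) g) (hab : a ≤ b)
    (hamb : a < m * b) (hα : 0 ≤ α) (hg0 : ∀ x ∈ Icc a (m * b), 0 ≤ g x)
    (hgm : AEStronglyMeasurable g (volume.restrict (Ioc a (m * b)))) :
    IntervalIntegrable g volume a (m * b) := by
  have hbound : IntervalIntegrable
      (fun x => (g a - m * g b) * ((m * b - x) / (m * b - a)) ^ α + m * g b) volume a (m * b) :=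
    ((by fun_prop : Continuous _).intervalIntegrable _ _)
  rw [intervalIntegrable_iff_integrableOn_Ioc_of_le hamb.le] at hbound ⊢
  refine hbound.mono' hgm ((ae_restrict_iff' measurableSet_Ioc).2 (Filter.Eventually.of_forall ?_))
  intro x hx
  rw [Real.norm_of_nonneg (hg0 x (Ioc_subset_Icc_self hx))]
  exact hg.le_interpolant hab hamb (Ioc_subset_Icc_self hx)

theorem integral_le (hg : AlphaMConvexOn α m (Icc a b) g) (hab : a ≤ b) (hamb : a < m * b)
    (hα : 0 ≤ α) (hgi : IntervalIntegrable g volume a (m * b)) :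
    ∫ x in a..m * b, g x ≤ (m * b - a) * (g a / (α + 1) + m * g b * (α / (α + 1))) := by
  have hpow : IntervalIntegrable (fun x => ((m * b - x) / (m * b - a)) ^ α) volume a (m * b) :=
    ((by fun_prop : Continuous _).intervalIntegrable _ _)
  calc ∫ x in a..m * b, g x
      ≤ ∫ x in a..m * b, (g a - m * g b) * ((m * b - x) / (m * b - a)) ^ α + m * g b :=
        intervalIntegral.integral_mono_on hamb.le hgi ((hpow.const_mul _).add
          intervalIntegrable_const) fun x hx => hg.le_interpolant hab hamb hx
    _ = (m * b - a) * (g a / (α + 1) + m * g b * (α / (α + 1))) := by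
      rw [intervalIntegral.integral_add (hpow.const_mul _) intervalIntegrable_const,
        intervalIntegral.integral_const_mul, integral_sub_div_sub_rpow hamb (by linarith),
        intervalIntegral.integral_const, smul_eq_mul]
      field_simp
      ring

end AlphaMConvexOn

theorem holderConjugate_of_one_div_add_one_div {p q : ℝ} (hq : 1 < q) (hpq : 1 / p + 1 / q = 1) :
    p.HolderConjugate q := by
  have hq1 : 1 / q < 1 := (div_lt_one (by linarith)).2 hq
  simpa using Real.HolderConjugate.inv_inv (by linarith) (one_div_pos.2 (by linarith)) hpq

theorem one_div_two_mul_mul_rpow_mul_rpow_eq {L G M p q : ℝ} (hL : 0 < L) (hG : 0 ≤ G)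
    (hM : 0 ≤ M) (hpq : p.HolderConjugate q) :
    1 / (2 * L) * ((L ^ (2 * p + 1) * 2 ^ (-2 * p) * G) ^ (1 / p) * (L * M) ^ (1 / q))
      = L ^ 2 / 8 * G ^ (1 / p) * M ^ (1 / q) := by
  have hp : p ≠ 0 := hpq.ne_zero
  have hL3 : L ^ ((2 * p + 1) * (1 / p)) * L ^ (1 / q) = L ^ 3 := by
    rw [← rpow_add hL, show (2 * p + 1) * (1 / p) + 1 / q = (3 : ℕ) by
      rw [one_div, one_div, ← hpq.one_sub_inv]; field_simp; ring, rpow_natCast]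
  have h4 : (2 : ℝ) ^ (-2 * p * (1 / p)) = 1 / 4 := by
    rw [show -2 * p * (1 / p) = -2 by field_simp, rpow_neg two_pos.le]
    norm_num
  rw [mul_rpow (by positivity) hG, mul_rpow (by positivity) (by positivity), mul_rpow hL.le hM,
    ← rpow_mul hL.le, ← rpow_mul two_pos.le, h4]
  generalize L ^ ((2 * p + 1) * (1 / p)) = X at hL3 ⊢
  field_simp
  linear_combination 8 * G ^ (1 / p) * M ^ (1 / q) * hL3

theorem thm22_general
    (f f' f'' : ℝ → ℝ) (a b m α p q : ℝ)
    (hab : a < b) (hα : α ∈ Set.Icc (0:ℝ) 1)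
    (hamb : a < m * b) (hq : 1 < q) (hpq : 1 / p + 1 / q = 1)
    (hf : ∀ x ∈ Set.Icc a (m * b), HasDerivAt f (f' x) x)
    (hf' : ∀ x ∈ Set.Icc a (m * b), HasDerivAt f' (f'' x) x)
    (hint : IntervalIntegrable f'' MeasureTheory.volume a (m * b))
    (hconv : ∀ x ∈ Set.Icc a b, ∀ y ∈ Set.Icc a b, ∀ t ∈ Set.Icc (0:ℝ) 1,
      |f'' (t * x + m * (1 - t) * y)| ^ q
        ≤ t ^ α * |f'' x| ^ q + m * (1 - t ^ α) * |f'' y| ^ q) :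
    |(f a + f (m * b)) / 2 - (1 / (m * b - a)) * ∫ x in a..(m * b), f x|
      ≤ ((m * b - a) ^ 2 / 8) * (Real.Gamma (1 + p) / Real.Gamma (3 / 2 + p)) ^ (1 / p) *
        (|f'' a| ^ q / (α + 1) + m * |f'' b| ^ q * (α / (α + 1))) ^ (1 / q) := by
  have hL : 0 < m * b - a := sub_pos.2 hamb
  have hconj : p.HolderConjugate q := holderConjugate_of_one_div_add_one_div hq hpq
  have hp : 0 < p := hconj.pos
  have hg : AlphaMConvexOn α m (Icc a b) (fun x => |f'' x| ^ q) := hconv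
  have hgi := hg.intervalIntegrable hab.le hamb hα.1 (fun x _ => by positivity)
    (hint.1.aestronglyMeasurable.norm.aemeasurable.pow_const q).aestronglyMeasurable
  have hW := integral_mul_sub_rpow_le hamb (by linarith : -1 < p)
  have hW0 : 0 ≤ ∫ x in a..m * b, ((x - a) * (m * b - x)) ^ p :=
    intervalIntegral.integral_nonneg hamb.le fun x hx =>
      rpow_nonneg (mul_nonneg (sub_nonneg.2 hx.1) (sub_nonneg.2 hx.2)) _
  have hQ := hg.integral_le hab.le hamb hα.1 hgi
  have hQ0 : 0 ≤ ∫ x in a..m * b, |f'' x| ^ q :=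
    intervalIntegral.integral_nonneg hamb.le fun x _ => by positivity
  calc _ ≤ 1 / (2 * (m * b - a)) * ((∫ x in a..m * b, ((x - a) * (m * b - x)) ^ p) ^ (1 / p)
          * (∫ x in a..m * b, |f'' x| ^ q) ^ (1 / q)) :=
        abs_trapezoid_sub_average_le_Lp_mul_Lq hconj hamb hf hf' hint hgi
    _ ≤ 1 / (2 * (m * b - a)) * (((m * b - a) ^ (2 * p + 1) * 2 ^ (-2 * p)
          * (Gamma (1 + p) / Gamma (3 / 2 + p))) ^ (1 / p)
          * ((m * b - a) * (|f'' a| ^ q / (α + 1) + m * |f'' b| ^ q * (α / (α + 1))))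
            ^ (1 / q)) := by
        gcongr
    _ = _ := one_div_two_mul_mul_rpow_mul_rpow_eq hL
        (div_nonneg (Gamma_pos_of_pos (by linarith)).le (Gamma_pos_of_pos (by linarith)).le)
        ((mul_nonneg_iff_of_pos_left hL).1 (hQ0.trans hQ)) hconj

theorem thm22
    (f f' f'' : ℝ → ℝ) (a b bstar m α p q : ℝ)
    (hb : b ≤ bstar) (hbstar : 0 < bstar)
    (ha : 0 ≤ a) (hab : a < b) (hm : m ∈ Set.Ioc (0:ℝ) 1) (hα : α ∈ Set.Icc (0:ℝ) 1)
    (hamb : a < m * b) (hq : 1 < q) (hpq : 1 / p + 1 / q = 1)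
    (hf : ∀ x ∈ Set.Icc a (m * b), HasDerivAt f (f' x) x)
    (hf' : ∀ x ∈ Set.Icc a (m * b), HasDerivAt f' (f'' x) x)
    (hint : IntervalIntegrable f'' MeasureTheory.volume a (m * b))
    (hconv : ∀ x ∈ Set.Icc a b, ∀ y ∈ Set.Icc a b, ∀ t ∈ Set.Icc (0:ℝ) 1,
      |f'' (t * x + m * (1 - t) * y)| ^ q
        ≤ t ^ α * |f'' x| ^ q + m * (1 - t ^ α) * |f'' y| ^ q) :
    |(f a + f (m * b)) / 2 - (1 / (m * b - a)) * ∫ x in a..(m * b), f x|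
      ≤ ((m * b - a) ^ 2 / 8) * (Real.Gamma (1 + p) / Real.Gamma (3 / 2 + p)) ^ (1 / p) *
        (|f'' a| ^ q / (α + 1) + m * |f'' b| ^ q * (α / (α + 1))) ^ (1 / q) :=
  thm22_general f f' f'' a b m α p q hab hα hamb hq hpq hf hf' hint hconv
end

section
/- Let f : [0, b*] → ℝ be twice differentiable on an open interval containing [a, mb], 0 ≤ a < b ≤ b*, m ∈ (0,1], a < mb, f'' integrable on [a, mb]. If |f''|^q is (α,m)-convex on [a,b] for (α,m) ∈ [0,1]×(0,1] and q ≥ 1, then |(f(a)+f(mb))/2 − (1/(mb−a))∫_a^{mb} f(x)dx| ≤ ((mb−a)²/2)·(1/2)^{1−1/q}·( |f''(a)|^q·B(α+2, q+1) + m|f''(b)|^q·(1/((q+1)(q+2)) − B(α+2, q+1)) )^{1/q}, where B is the Beta function. -/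
/-!
Two integrations by parts and the substitution `x = t a + (1 - t) m b` turn the left-hand side
into `(m b - a)² / 2 · |∫₀¹ t (1 - t) f''(t a + (1 - t) m b) dt|`. The power-mean inequality with
weight `t` bounds `∫₀¹ t · (1 - t) |f''|` by `(1/2)^(1 - 1/q) (∫₀¹ t (1 - t)^q |f''|^q)^(1/q)`, and
(α,m)-convexity of `|f''|^q` at `x = a`, `y = b` bounds the last integrand by
`t^α |f''(a)|^q + m (1 - t^α) |f''(b)|^q`, whose weighted integral is the Beta expression.
-/

open MeasureTheory Set intervalIntegral

noncomputable def betaFn (x y : ℝ) : ℝ := ∫ t in (0:ℝ)..1, t ^ (x - 1) * (1 - t) ^ (y - 1)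

section

variable {X : Type*} [MeasurableSpace X] {μ : Measure X}

theorem memLp_ofReal_of_integrable_rpow {u : X → ℝ} {r : ℝ} (hr : 0 < r) (hu0 : 0 ≤ᵐ[μ] u)
    (hum : AEStronglyMeasurable u μ) (hui : Integrable (fun x ↦ u x ^ r) μ) :
    MemLp u (ENNReal.ofReal r) μ := by
  rw [← integrable_norm_rpow_iff hum (by simpa using hr) ENNReal.ofReal_ne_top,
    ENNReal.toReal_ofReal hr.le]
  refine hui.congr ?_
  filter_upwards [hu0] with x hx
  rw [Real.norm_of_nonneg hx]

theorem integral_mul_le_weight_mul_Lp {w h : X → ℝ} {q : ℝ} (hq : 1 ≤ q) (hw : 0 ≤ᵐ[μ] w)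
    (hh : 0 ≤ᵐ[μ] h) (hwi : Integrable w μ) (hhm : AEStronglyMeasurable h μ)
    (hwhi : Integrable (fun x ↦ w x * h x ^ q) μ) :
    ∫ x, w x * h x ∂μ ≤ (∫ x, w x ∂μ) ^ (1 - 1 / q) * (∫ x, w x * h x ^ q ∂μ) ^ (1 / q) := by
  rcases hq.eq_or_lt with rfl | hq
  · simp
  set p := q.conjExponent
  have hpq : p.HolderConjugate q := (Real.HolderConjugate.conjExponent hq).symm
  have hp_inv : 1 / p = 1 - 1 / q := by
    rw [eq_sub_iff_add_eq, one_div, one_div, hpq.inv_add_inv_eq_one]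
  have rpow_inv_rpow {x r : ℝ} (hx : 0 ≤ x) (hr : 0 < r) : (x ^ (1 / r)) ^ r = x := by
    rw [← Real.rpow_mul hx, one_div_mul_cancel hr.ne', Real.rpow_one]
  -- Hölder for `w ^ (1/p)` and `w ^ (1/q) * h`.
  set F := fun x ↦ w x ^ (1 / p)
  set G := fun x ↦ w x ^ (1 / q) * h x
  have hFp : (fun x ↦ F x ^ p) =ᵐ[μ] w := by
    filter_upwards [hw] with x hx using rpow_inv_rpow hx hpq.pos
  have hGq : (fun x ↦ G x ^ q) =ᵐ[μ] fun x ↦ w x * h x ^ q := by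
    filter_upwards [hw, hh] with x hx hhx
    rw [Real.mul_rpow (Real.rpow_nonneg hx _) hhx, rpow_inv_rpow hx hpq.symm.pos]
  have hFG : (fun x ↦ F x * G x) =ᵐ[μ] fun x ↦ w x * h x := by
    filter_upwards [hw] with x hx
    have hsum : 1 / p + 1 / q = 1 := by rw [one_div, one_div, hpq.inv_add_inv_eq_one]
    rw [← mul_assoc, ← Real.rpow_add' hx (by rw [hsum]; exact one_ne_zero), hsum, Real.rpow_one]
  have hF0 : 0 ≤ᵐ[μ] F := by filter_upwards [hw] with x hx using Real.rpow_nonneg hx _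
  have hG0 : 0 ≤ᵐ[μ] G := by
    filter_upwards [hw, hh] with x hx hhx using mul_nonneg (Real.rpow_nonneg hx _) hhx
  have hFm : AEStronglyMeasurable F μ :=
    (hwi.aemeasurable.pow_const _).aestronglyMeasurable
  have hGm : AEStronglyMeasurable G μ :=
    (hwi.aemeasurable.pow_const _).aestronglyMeasurable.mul hhm
  have key := integral_mul_le_Lp_mul_Lq_of_nonneg hpq hF0 hG0
    (memLp_ofReal_of_integrable_rpow hpq.pos hF0 hFm (hwi.congr hFp.symm))
    (memLp_ofReal_of_integrable_rpow hpq.symm.pos hG0 hGm (hwhi.congr hGq.symm))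
  rwa [integral_congr_ae hFG, integral_congr_ae hFp, integral_congr_ae hGq, hp_inv] at key

theorem aestronglyMeasurable_comp_of_hasDerivAt {f' f'' : ℝ → ℝ} {φ : X → ℝ} {s : Set X}
    (hs : MeasurableSet s) (hφ : Measurable φ) (h : ∀ x ∈ s, HasDerivAt f' (f'' (φ x)) (φ x)) :
    AEStronglyMeasurable (fun x ↦ f'' (φ x)) (μ.restrict s) := by
  refine ((measurable_deriv f').comp hφ).aestronglyMeasurable.congr ?_
  filter_upwards [ae_restrict_mem hs] with x hx using (h x hx).deriv

end

theorem integral_mul_one_sub_mul_le {g : ℝ → ℝ} {q : ℝ} (hq : 1 ≤ q)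
    (hg0 : ∀ t ∈ Ioc (0:ℝ) 1, 0 ≤ g t) (hgm : AEStronglyMeasurable g (volume.restrict (Ioc 0 1)))
    (hgi : IntervalIntegrable (fun t ↦ t * (1 - t) ^ q * g t ^ q) volume 0 1) :
    ∫ t in (0:ℝ)..1, t * (1 - t) * g t
      ≤ (1 / 2 : ℝ) ^ (1 - 1 / q) * (∫ t in (0:ℝ)..1, t * (1 - t) ^ q * g t ^ q) ^ (1 / q) := by
  have hpow : EqOn (fun t ↦ t * ((1 - t) * g t) ^ q) (fun t ↦ t * (1 - t) ^ q * g t ^ q)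
      (Ioc 0 1) := fun t ht ↦ by
    simp only [Real.mul_rpow (sub_nonneg.2 ht.2) (hg0 t ht), mul_assoc]
  rw [intervalIntegrable_iff_integrableOn_Ioc_of_le zero_le_one] at hgi
  have hmean : ∫ t in Ioc (0:ℝ) 1, t = 1 / 2 := by
    rw [← integral_of_le zero_le_one, integral_id]; norm_num
  have hpm := integral_mul_le_weight_mul_Lp (μ := volume.restrict (Ioc (0:ℝ) 1))
    (w := fun t ↦ t) (h := fun t ↦ (1 - t) * g t) hq
    (by filter_upwards [ae_restrict_mem measurableSet_Ioc] with t ht using ht.1.le)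
    (by filter_upwards [ae_restrict_mem measurableSet_Ioc] with t ht
        using mul_nonneg (sub_nonneg.2 ht.2) (hg0 t ht))
    continuous_id.integrableOn_Ioc
    ((continuous_const.sub continuous_id).aestronglyMeasurable.mul hgm)
    (hgi.congr_fun hpow.symm measurableSet_Ioc)
  rw [hmean, setIntegral_congr_fun measurableSet_Ioc hpow, ← integral_of_le zero_le_one,
    ← integral_of_le zero_le_one] at hpm
  simpa only [mul_assoc] using hpm

theorem integral_mul_one_sub_mul_le_of_rpow_le {g K : ℝ → ℝ} {q : ℝ} (hq : 1 ≤ q)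
    (hg0 : ∀ t ∈ Icc (0:ℝ) 1, 0 ≤ g t) (hgm : AEStronglyMeasurable g (volume.restrict (Ioc 0 1)))
    (hK : ContinuousOn K (Icc 0 1)) (hgK : ∀ t ∈ Icc (0:ℝ) 1, g t ^ q ≤ K t) :
    ∫ t in (0:ℝ)..1, t * (1 - t) * g t
      ≤ (1 / 2 : ℝ) ^ (1 - 1 / q) * (∫ t in (0:ℝ)..1, t * (1 - t) ^ q * K t) ^ (1 / q) := by
  have hq0 : 0 ≤ q := by linarith
  have hweight : Continuous fun t : ℝ ↦ t * (1 - t) ^ q := by fun_prop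
  have hweight0 : ∀ t ∈ Icc (0:ℝ) 1, 0 ≤ t * (1 - t) ^ q :=
    fun t ht ↦ mul_nonneg ht.1 (Real.rpow_nonneg (sub_nonneg.2 ht.2) _)
  have hbound : ∀ t ∈ Icc (0:ℝ) 1, t * (1 - t) ^ q * g t ^ q ≤ t * (1 - t) ^ q * K t :=
    fun t ht ↦ mul_le_mul_of_nonneg_left (hgK t ht) (hweight0 t ht)
  have hKi : IntervalIntegrable (fun t ↦ t * (1 - t) ^ q * K t) volume 0 1 :=
    (hweight.continuousOn.mul hK).intervalIntegrable_of_Icc zero_le_one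
  have hgi : IntervalIntegrable (fun t ↦ t * (1 - t) ^ q * g t ^ q) volume 0 1 := by
    rw [intervalIntegrable_iff_integrableOn_Ioc_of_le zero_le_one] at hKi ⊢
    refine hKi.mono' (hweight.aestronglyMeasurable.mul
      (hgm.aemeasurable.pow_const q).aestronglyMeasurable) ?_
    filter_upwards [ae_restrict_mem measurableSet_Ioc] with t ht
    have ht' : t ∈ Icc (0:ℝ) 1 := Ioc_subset_Icc_self ht
    rw [Real.norm_of_nonneg (mul_nonneg (hweight0 t ht') (Real.rpow_nonneg (hg0 t ht') _))]
    exact hbound t ht'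
  refine (integral_mul_one_sub_mul_le hq (fun t ht ↦ hg0 t (Ioc_subset_Icc_self ht)) hgm
    hgi).trans ?_
  gcongr
  · exact integral_nonneg zero_le_one fun t ht ↦
      mul_nonneg (hweight0 t ht) (Real.rpow_nonneg (hg0 t ht) _)
  · exact integral_mono_on zero_le_one hgi hKi hbound

theorem integral_quadratic_mul_second_deriv_eq {f f' f'' : ℝ → ℝ} {a c : ℝ} (hac : a ≤ c)
    (hf : ∀ x ∈ Icc a c, HasDerivAt f (f' x) x) (hf' : ∀ x ∈ Icc a c, HasDerivAt f' (f'' x) x)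
    (hint : IntervalIntegrable f'' volume a c) :
    ∫ x in a..c, (x - a) * (c - x) * f'' x = (c - a) * (f a + f c) - 2 * ∫ x in a..c, f x := by
  rw [← uIcc_of_le hac] at hf hf'
  have hf'i : IntervalIntegrable f' volume a c :=
    ContinuousOn.intervalIntegrable fun x hx ↦ (hf' x hx).continuousAt.continuousWithinAt
  have hquad : ∀ x ∈ uIcc a c, HasDerivAt (fun x ↦ (x - a) * (c - x)) (a + c - 2 * x) x :=
    fun x _ ↦ (((hasDerivAt_id x).sub_const a).mul ((hasDerivAt_id x).const_sub c)).congr_deriv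
      (by simp only [id]; ring)
  have hlin : ∀ x ∈ uIcc a c, HasDerivAt (fun x ↦ a + c - 2 * x) (-2) x :=
    fun x _ ↦ (((hasDerivAt_id x).const_mul 2).const_sub (a + c)).congr_deriv (by simp)
  have hlin_int : IntervalIntegrable (fun x ↦ a + c - 2 * x) volume a c :=
    (continuous_const.sub (continuous_const.mul continuous_id)).intervalIntegrable _ _
  rw [integral_mul_deriv_eq_deriv_mul hquad hf' hlin_int hint,
    integral_mul_deriv_eq_deriv_mul hlin hf intervalIntegrable_const hf'i,
    intervalIntegral.integral_const_mul]
  ring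

theorem trapezoid_sub_average_eq {f f' f'' : ℝ → ℝ} {a c : ℝ} (hac : a < c)
    (hf : ∀ x ∈ Icc a c, HasDerivAt f (f' x) x) (hf' : ∀ x ∈ Icc a c, HasDerivAt f' (f'' x) x)
    (hint : IntervalIntegrable f'' volume a c) :
    (f a + f c) / 2 - (1 / (c - a)) * ∫ x in a..c, f x
      = ((c - a) ^ 2 / 2) * ∫ t in (0:ℝ)..1, t * (1 - t) * f'' (t * a + (1 - t) * c) := by
  have hca : c - a ≠ 0 := sub_ne_zero.2 hac.ne'
  have hac' : a - c ≠ 0 := sub_ne_zero.2 hac.ne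
  have hsubst := integral_comp_mul_add (a := 0) (b := 1)
    (fun x ↦ ((c - a) ^ 2)⁻¹ * ((x - a) * (c - x) * f'' x)) hac' c
  simp only [mul_zero, mul_one, zero_add, sub_add_cancel, smul_eq_mul] at hsubst
  have hpath : ∀ t : ℝ, (a - c) * t + c = t * a + (1 - t) * c := fun t ↦ by ring
  have hweight : ∀ t : ℝ, ((c - a) ^ 2)⁻¹
      * ((t * a + (1 - t) * c - a) * (c - (t * a + (1 - t) * c)) * f'' (t * a + (1 - t) * c))
      = t * (1 - t) * f'' (t * a + (1 - t) * c) :=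
    fun t ↦ by field_simp; ring
  simp only [hpath, hweight] at hsubst
  rw [hsubst, integral_symm a c, intervalIntegral.integral_const_mul,
    integral_quadratic_mul_second_deriv_eq hac.le hf hf' hint]
  field_simp
  ring

theorem integral_mul_one_sub_rpow_mul_rpow_eq_betaFn (α q : ℝ) :
    ∫ t in (0:ℝ)..1, t * (1 - t) ^ q * t ^ α = betaFn (α + 2) (q + 1) := by
  rw [betaFn, show α + 2 - 1 = α + 1 by ring, add_sub_cancel_right,
    integral_of_le zero_le_one, integral_of_le zero_le_one]
  refine setIntegral_congr_fun measurableSet_Ioc fun t ht ↦ ?_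
  simp only [Real.rpow_add ht.1, Real.rpow_one]
  ring

theorem integral_rpow_zero_one {r : ℝ} (hr : -1 < r) : ∫ t in (0:ℝ)..1, t ^ r = 1 / (r + 1) := by
  rw [integral_rpow (Or.inl hr), Real.one_rpow, Real.zero_rpow (by linarith), sub_zero, one_div]

theorem integral_mul_one_sub_rpow {q : ℝ} (hq : -1 < q) :
    ∫ t in (0:ℝ)..1, t * (1 - t) ^ q = 1 / ((q + 1) * (q + 2)) := by
  have hreflect := integral_comp_sub_left (a := (0:ℝ)) (b := 1) (fun u ↦ (1 - u) * u ^ q) 1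
  simp only [sub_sub_cancel, sub_zero, sub_self] at hreflect
  have hsplit : ∫ u in (0:ℝ)..1, (1 - u) * u ^ q = ∫ u in (0:ℝ)..1, (u ^ q - u ^ (q + 1)) := by
    refine integral_congr_ae (Filter.Eventually.of_forall fun u hu ↦ ?_)
    rw [uIoc_of_le zero_le_one] at hu
    rw [Real.rpow_add hu.1, Real.rpow_one]
    ring
  rw [hreflect, hsplit, integral_sub (intervalIntegrable_rpow' hq)
    (intervalIntegrable_rpow' (by linarith)), integral_rpow_zero_one hq,
    integral_rpow_zero_one (by linarith)]
  have hq1 : q + 1 ≠ 0 := by linarith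
  have hq2 : q + 2 ≠ 0 := by linarith
  rw [show q + 1 + 1 = q + 2 by ring]
  field_simp
  ring

theorem integral_mul_one_sub_rpow_mul_convexBound {α q : ℝ} (hα : 0 ≤ α) (hq : 0 ≤ q)
    (A B m : ℝ) :
    ∫ t in (0:ℝ)..1, t * (1 - t) ^ q * (t ^ α * A + m * (1 - t ^ α) * B)
      = A * betaFn (α + 2) (q + 1)
        + m * B * (1 / ((q + 1) * (q + 2)) - betaFn (α + 2) (q + 1)) := by
  have hw : Continuous fun t : ℝ ↦ t * (1 - t) ^ q := by fun_prop
  have hwα : Continuous fun t : ℝ ↦ t * (1 - t) ^ q * t ^ α :=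
    hw.mul (Real.continuous_rpow_const hα)
  have hexpand : ∀ t : ℝ, t * (1 - t) ^ q * (t ^ α * A + m * (1 - t ^ α) * B)
      = (A - m * B) * (t * (1 - t) ^ q * t ^ α) + m * B * (t * (1 - t) ^ q) := fun t ↦ by ring
  simp only [hexpand]
  rw [integral_add ((hwα.intervalIntegrable _ _).const_mul _)
      ((hw.intervalIntegrable _ _).const_mul _),
    intervalIntegral.integral_const_mul, intervalIntegral.integral_const_mul,
    integral_mul_one_sub_rpow_mul_rpow_eq_betaFn, integral_mul_one_sub_rpow (by linarith)]
  ring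

theorem thm24_general
    (f f' f'' : ℝ → ℝ) (a b m α q : ℝ)
    (hab : a < b) (hα : α ∈ Set.Icc (0:ℝ) 1)
    (hamb : a < m * b) (hq : 1 ≤ q)
    (hf : ∀ x ∈ Set.Icc a (m * b), HasDerivAt f (f' x) x)
    (hf' : ∀ x ∈ Set.Icc a (m * b), HasDerivAt f' (f'' x) x)
    (hint : IntervalIntegrable f'' MeasureTheory.volume a (m * b))
    (hconv : ∀ x ∈ Set.Icc a b, ∀ y ∈ Set.Icc a b, ∀ t ∈ Set.Icc (0:ℝ) 1,
      |f'' (t * x + m * (1 - t) * y)| ^ q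
        ≤ t ^ α * |f'' x| ^ q + m * (1 - t ^ α) * |f'' y| ^ q) :
    |(f a + f (m * b)) / 2 - (1 / (m * b - a)) * ∫ x in a..(m * b), f x|
      ≤ ((m * b - a) ^ 2 / 2) * (1 / 2 : ℝ) ^ (1 - 1 / q) *
        (|f'' a| ^ q * betaFn (α + 2) (q + 1)
          + m * |f'' b| ^ q * (1 / ((q + 1) * (q + 2)) - betaFn (α + 2) (q + 1))) ^ (1 / q) := by
  set c := m * b with hc
  have hpath : ∀ t ∈ Icc (0:ℝ) 1, t * a + (1 - t) * c ∈ Icc a c := fun t ht ↦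
    ⟨by nlinarith [ht.1, ht.2], by nlinarith [ht.1, ht.2]⟩
  have hconv_path : ∀ t ∈ Icc (0:ℝ) 1, |f'' (t * a + (1 - t) * c)| ^ q
      ≤ t ^ α * |f'' a| ^ q + m * (1 - t ^ α) * |f'' b| ^ q := fun t ht ↦ by
    have h := hconv a ⟨le_rfl, hab.le⟩ b ⟨hab.le, le_rfl⟩ t ht
    rwa [show t * a + m * (1 - t) * b = t * a + (1 - t) * c by rw [hc]; ring] at h
  have hmeas : AEStronglyMeasurable (fun t ↦ |f'' (t * a + (1 - t) * c)|)
      (volume.restrict (Ioc 0 1)) :=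
    continuous_abs.comp_aestronglyMeasurable (aestronglyMeasurable_comp_of_hasDerivAt
      measurableSet_Ioc (by fun_prop) fun t ht ↦ hf' _ (hpath t (Ioc_subset_Icc_self ht)))
  have habs : |∫ t in (0:ℝ)..1, t * (1 - t) * f'' (t * a + (1 - t) * c)|
      ≤ ∫ t in (0:ℝ)..1, t * (1 - t) * |f'' (t * a + (1 - t) * c)| := by
    refine (abs_integral_le_integral_abs zero_le_one).trans_eq (integral_congr fun t ht ↦ ?_)
    rw [uIcc_of_le zero_le_one] at ht
    simp only [abs_mul, abs_of_nonneg ht.1, abs_of_nonneg (sub_nonneg.2 ht.2)]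
  rw [trapezoid_sub_average_eq hamb hf hf' hint, abs_mul, abs_of_nonneg (by positivity),
    mul_assoc, ← integral_mul_one_sub_rpow_mul_convexBound hα.1 (by linarith)]
  gcongr
  exact habs.trans (integral_mul_one_sub_mul_le_of_rpow_le hq (fun t _ ↦ abs_nonneg _) hmeas
    (by fun_prop (disch := exact hα.1)) hconv_path)

theorem thm24
    (f f' f'' : ℝ → ℝ) (a b bstar m α q : ℝ)
    (hb : b ≤ bstar) (hbstar : 0 < bstar)
    (ha : 0 ≤ a) (hab : a < b) (hm : m ∈ Set.Ioc (0:ℝ) 1) (hα : α ∈ Set.Icc (0:ℝ) 1)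
    (hamb : a < m * b) (hq : 1 ≤ q)
    (hf : ∀ x ∈ Set.Icc a (m * b), HasDerivAt f (f' x) x)
    (hf' : ∀ x ∈ Set.Icc a (m * b), HasDerivAt f' (f'' x) x)
    (hint : IntervalIntegrable f'' MeasureTheory.volume a (m * b))
    (hconv : ∀ x ∈ Set.Icc a b, ∀ y ∈ Set.Icc a b, ∀ t ∈ Set.Icc (0:ℝ) 1,
      |f'' (t * x + m * (1 - t) * y)| ^ q
        ≤ t ^ α * |f'' x| ^ q + m * (1 - t ^ α) * |f'' y| ^ q) :
    |(f a + f (m * b)) / 2 - (1 / (m * b - a)) * ∫ x in a..(m * b), f x|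
      ≤ ((m * b - a) ^ 2 / 2) * (1 / 2 : ℝ) ^ (1 - 1 / q) *
        (|f'' a| ^ q * betaFn (α + 2) (q + 1)
          + m * |f'' b| ^ q * (1 / ((q + 1) * (q + 2)) - betaFn (α + 2) (q + 1))) ^ (1 / q) :=
  thm24_general f f' f'' a b m α q hab hα hamb hq hf hf' hint hconv
end
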